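/- For all μ > 0 and all real B, the integral over X from 0 to ∞ of e^{−μX} · (e^{−X}/(2√π))·(BX+2)·(2√X(X+1) − e^X √π X(2X+3)(1 − erf(√X))) equals Q(μ,B) = (1/μ⁴)·(−3μ² − 3Bμ − 4μ − 6B + (4μ³ + 3Bμ² + 20μ² + 24Bμ + 16μ + 24B)/(4√(1+μ))). -/

import Mathlib

open Real MeasureTheory

/-- The Gauss error function. -/
noncomputable def erf (t : ℝ) : ℝ := (2 / Real.sqrt π) * ∫ s in (0 : ℝ)..t, Real.exp (-s ^ 2)

/-- The inverse Laplace transform `Q̌(X, B)` of `Q(μ, B)`. -/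
noncomputable def Qcheck (X B : ℝ) : ℝ :=
  (Real.exp (-X) / (2 * Real.sqrt π)) * (B * X + 2) *
    (2 * Real.sqrt X * (X + 1) -
      Real.exp X * Real.sqrt π * X * (2 * X + 3) * (1 - erf (Real.sqrt X)))

/-- The function `Q(μ, B)`. -/
noncomputable def Qfun (μ B : ℝ) : ℝ :=
  (1 / μ ^ 4) *
    (-3 * μ ^ 2 - 3 * B * μ - 4 * μ - 6 * B +
      (4 * μ ^ 3 + 3 * B * μ ^ 2 + 20 * μ ^ 2 + 24 * B * μ + 16 * μ + 24 * B) /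
        (4 * Real.sqrt (1 + μ)))

/-!
Write `Q̌(x) = P(x) erfc √x + e^{-x} √x R(x) / √π` with polynomials `P, R`. Differentiating
`e^{-μx} (p(x) erfc √x + e^{-x} √x q(x) / √π) + r erf √((1 + μ) x)` gives back a function of the
same shape, and it is `e^{-μx} Q̌(x)` as soon as `p' - μ p = P` and
`q / 2 + x (q' - (1 + μ) q) - p + r √(1 + μ) = x R`; this triangular system is solved by
back-substitution from the leading coefficients. Since the exponential kills polynomial growth,
the integral over `(0, ∞)` is the value `r` of this antiderivative at infinity minus its value
`p(0)` at zero.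
-/

open Filter Topology Asymptotics Polynomial

theorem hasDerivAt_erf (t : ℝ) : HasDerivAt erf (2 / √π * exp (-t ^ 2)) t := by
  have hcont : Continuous fun s : ℝ => exp (-s ^ 2) := by fun_prop
  exact ((hcont.integral_hasStrictDerivAt 0 t).hasDerivAt).const_mul (2 / √π)

@[fun_prop]
theorem continuous_erf : Continuous erf :=
  continuous_iff_continuousAt.mpr fun t => (hasDerivAt_erf t).continuousAt

theorem erf_zero : erf 0 = 0 := by simp [erf]

theorem tendsto_erf_atTop : Tendsto erf atTop (𝓝 1) := by
  have hint : IntegrableOn (fun s : ℝ => exp (-s ^ 2)) (Set.Ioi 0) := by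
    simpa using (integrable_exp_neg_mul_sq one_pos).integrableOn
  have h := (intervalIntegral_tendsto_integral_Ioi 0 hint tendsto_id).const_mul (2 / √π)
  have hπ : √π ≠ 0 := by positivity
  rwa [show ∫ s in Set.Ioi (0 : ℝ), exp (-s ^ 2) = √π / 2 by simpa using integral_gaussian_Ioi 1,
    div_mul_div_cancel₀ hπ, div_self two_ne_zero] at h

theorem tendsto_one_sub_erf_sqrt_atTop : Tendsto (fun x => 1 - erf √x) atTop (𝓝 0) := by
  simpa using (tendsto_erf_atTop.comp tendsto_sqrt_atTop).const_sub 1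

theorem hasDerivAt_erf_sqrt_mul {c x : ℝ} (hc : 0 < c) (hx : 0 < x) :
    HasDerivAt (fun y => erf √(c * y)) (√c * exp (-(c * x)) / (√π * √x)) x := by
  have hcx : 0 < c * x := mul_pos hc hx
  have h := (hasDerivAt_erf √(c * x)).comp x
    ((hasDerivAt_sqrt hcx.ne').comp x ((hasDerivAt_id x).const_mul c))
  refine h.congr_deriv ?_
  rw [sq_sqrt hcx.le, sqrt_mul hc.le]
  field_simp [(sqrt_pos.2 hx).ne', (sqrt_pos.2 hc).ne']
  exact (sq_sqrt hc.le).symm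

theorem Polynomial.isLittleO_exp_mul_atTop (p : ℝ[X]) {b : ℝ} (hb : 0 < b) :
    (fun x => p.eval x) =o[atTop] fun x => exp (b * x) := by
  have h := p.isBigO_atTop_of_degree_le (X ^ p.natDegree) (by simp [degree_le_natDegree])
  simp only [eval_X_pow] at h
  exact h.trans_isLittleO (isLittleO_pow_exp_pos_mul_atTop _ hb)

theorem Polynomial.tendsto_exp_neg_mul_mul_eval_atTop (p : ℝ[X]) {c : ℝ} (hc : 0 < c) :
    Tendsto (fun x => exp (-c * x) * p.eval x) atTop (𝓝 0) := by
  refine ((p.isLittleO_exp_mul_atTop hc).tendsto_div_nhds_zero).congr fun x => ?_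
  rw [neg_mul, exp_neg]
  ring

theorem tendsto_sqrt_mul_exp_neg_atTop : Tendsto (fun x => √x * exp (-x)) atTop (𝓝 0) := by
  refine (tendsto_rpow_mul_exp_neg_mul_atTop_nhds_zero (1 / 2) 1 one_pos).congr fun x => ?_
  rw [sqrt_eq_rpow, neg_one_mul]

noncomputable def erfcSqrtPoly (p q : ℝ[X]) (x : ℝ) : ℝ :=
  p.eval x * (1 - erf √x) + exp (-x) * √x * q.eval x / √π

@[fun_prop]
theorem continuous_erfcSqrtPoly (p q : ℝ[X]) : Continuous (erfcSqrtPoly p q) := by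
  unfold erfcSqrtPoly
  fun_prop

theorem tendsto_exp_neg_mul_mul_erfcSqrtPoly (p q : ℝ[X]) {c : ℝ} (hc : 0 < c) :
    Tendsto (fun x => exp (-c * x) * erfcSqrtPoly p q x) atTop (𝓝 0) := by
  have hp := (p.tendsto_exp_neg_mul_mul_eval_atTop hc).mul tendsto_one_sub_erf_sqrt_atTop
  have hq := ((q.tendsto_exp_neg_mul_mul_eval_atTop hc).mul
    tendsto_sqrt_mul_exp_neg_atTop).div_const √π
  have h := hp.add hq
  simp only [mul_zero, zero_div, add_zero] at h
  refine h.congr fun x => ?_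
  unfold erfcSqrtPoly
  ring

theorem integrableOn_exp_neg_mul_mul_erfcSqrtPoly (p q : ℝ[X]) {c : ℝ} (hc : 0 < c) :
    IntegrableOn (fun x => exp (-c * x) * erfcSqrtPoly p q x) (Set.Ioi 0) := by
  refine integrable_of_isBigO_exp_neg (half_pos hc) (by fun_prop : Continuous _).continuousOn ?_
  have hbdd := (tendsto_exp_neg_mul_mul_erfcSqrtPoly p q (half_pos hc)).isBigO_one ℝ
  refine ((isBigO_refl (fun x => exp (-(c / 2) * x)) atTop).mul hbdd).congr (fun x => ?_) fun x => mul_one _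
  rw [← mul_assoc, ← exp_add]
  ring_nf

theorem hasDerivAt_erfcSqrtPoly (p q : ℝ[X]) {x : ℝ} (hx : 0 < x) :
    HasDerivAt (erfcSqrtPoly p q)
      (p.derivative.eval x * (1 - erf √x) + exp (-x) *
        (q.eval x / 2 + x * (q.derivative.eval x - q.eval x) - p.eval x) / (√π * √x)) x := by
  have hE : HasDerivAt (fun y => erf √y) (exp (-x) / (√π * √x)) x := by
    simpa using hasDerivAt_erf_sqrt_mul one_pos hx
  have h := ((p.hasDerivAt x).mul (hE.const_sub 1)).add
    ((((hasDerivAt_neg x).exp.mul (hasDerivAt_sqrt hx.ne')).mul (q.hasDerivAt x)).div_const √π)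
  refine h.congr_deriv ?_
  simp only [Pi.mul_apply]
  field_simp
  rw [sq_sqrt hx.le]
  ring

theorem hasDerivAt_exp_neg_mul_mul_erfcSqrtPoly_add_mul_erf {μ r x : ℝ} {p q P R : ℝ[X]}
    (hμ : 0 < 1 + μ) (hx : 0 < x) (hP : p.derivative.eval x - μ * p.eval x = P.eval x)
    (hR : q.eval x / 2 + x * (q.derivative.eval x - (1 + μ) * q.eval x) - p.eval x +
      r * √(1 + μ) = x * R.eval x) :
    HasDerivAt (fun y => exp (-μ * y) * erfcSqrtPoly p q y + r * erf √((1 + μ) * y))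
      (exp (-μ * x) * erfcSqrtPoly P R x) x := by
  have h := ((((hasDerivAt_id x).const_mul (-μ)).exp).mul (hasDerivAt_erfcSqrtPoly p q hx)).add
    ((hasDerivAt_erf_sqrt_mul hμ hx).const_mul r)
  refine h.congr_deriv ?_
  have hexp : exp (-((1 + μ) * x)) = exp (-μ * x) * exp (-x) := by
    rw [← exp_add]
    ring_nf
  have hsq : √x * √x = x := mul_self_sqrt hx.le
  simp only [erfcSqrtPoly, id, hexp, ← hP, neg_mul]
  field_simp
  linear_combination 2 * exp (-x) * hR - 2 * exp (-x) * (μ * q.eval x + R.eval x) * hsq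

theorem integral_exp_neg_mul_mul_erfcSqrtPoly {μ r : ℝ} {p q P R : ℝ[X]} (hμ : 0 < μ)
    (hP : ∀ x, p.derivative.eval x - μ * p.eval x = P.eval x)
    (hR : ∀ x, q.eval x / 2 + x * (q.derivative.eval x - (1 + μ) * q.eval x) - p.eval x +
      r * √(1 + μ) = x * R.eval x) :
    ∫ x in Set.Ioi 0, exp (-μ * x) * erfcSqrtPoly P R x = r - p.eval 0 := by
  have hμ' : 0 < 1 + μ := by linarith
  have hlim := (tendsto_exp_neg_mul_mul_erfcSqrtPoly p q hμ).add
    ((tendsto_erf_atTop.comp (tendsto_sqrt_atTop.comp (tendsto_id.const_mul_atTop hμ'))).const_mul r)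
  rw [integral_Ioi_of_hasDerivAt_of_tendsto (by fun_prop : Continuous _).continuousWithinAt
    (fun x hx => hasDerivAt_exp_neg_mul_mul_erfcSqrtPoly_add_mul_erf hμ' hx (hP x) (hR x))
    (integrableOn_exp_neg_mul_mul_erfcSqrtPoly P R hμ) hlim]
  simp [erfcSqrtPoly, erf_zero]

namespace Qcheck

noncomputable def erfcPoly (B : ℝ) : ℝ[X] := -C (1 / 2) * (C B * X + 2) * X * (2 * X + 3)

noncomputable def gaussPoly (B : ℝ) : ℝ[X] := (C B * X + 2) * (X + 1)

theorem eq_erfcSqrtPoly (x B : ℝ) : Qcheck x B = erfcSqrtPoly (erfcPoly B) (gaussPoly B) x := by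
  have hexp : exp (-x) * exp x = 1 := by rw [← exp_add, neg_add_cancel, exp_zero]
  simp only [Qcheck, erfcSqrtPoly, erfcPoly, gaussPoly, eval_mul, eval_add, eval_neg, eval_C,
    eval_X, eval_ofNat, eval_one]
  field_simp
  linear_combination (-(B * x + 2) * x * (2 * x + 3) * (1 - erf √x) * √π) * hexp

noncomputable def primErfcPoly (μ B : ℝ) : ℝ[X] :=
  C (B / μ) * X ^ 3 + C ((6 * B + (3 * B + 4) * μ) / (2 * μ ^ 2)) * X ^ 2 +
    C ((6 * B + (3 * B + 4) * μ + 3 * μ ^ 2) / μ ^ 3) * X +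
    C ((6 * B + (3 * B + 4) * μ + 3 * μ ^ 2) / μ ^ 4)

noncomputable def primGaussPoly (μ B : ℝ) : ℝ[X] :=
  -(C (B / μ) * X ^ 2 + C (((B + 2) * μ + 3 * B) / μ ^ 2) * X +
    C ((4 * μ ^ 2 + (3 * B + 8) * μ + 12 * B) / (2 * μ ^ 3)))

noncomputable def primErfCoeff (μ B : ℝ) : ℝ :=
  (4 * μ ^ 3 + 3 * B * μ ^ 2 + 20 * μ ^ 2 + 24 * B * μ + 16 * μ + 24 * B) /
    (4 * √(1 + μ)) / μ ^ 4

theorem primErfcPoly_ode {μ : ℝ} (hμ : μ ≠ 0) (B x : ℝ) :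
    (primErfcPoly μ B).derivative.eval x - μ * (primErfcPoly μ B).eval x =
      (erfcPoly B).eval x := by
  simp only [primErfcPoly, erfcPoly, derivative_add, derivative_mul, derivative_C,
    derivative_X_pow_succ, derivative_X, eval_add, eval_mul, eval_neg, eval_C, eval_pow, eval_X,
    eval_zero, eval_one, eval_ofNat]
  field_simp
  ring

theorem primGaussPoly_ode {μ : ℝ} (hμ : μ ≠ 0) (hμ' : 0 < 1 + μ) (B x : ℝ) :
    (primGaussPoly μ B).eval x / 2 +
        x * ((primGaussPoly μ B).derivative.eval x - (1 + μ) * (primGaussPoly μ B).eval x) -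
        (primErfcPoly μ B).eval x + primErfCoeff μ B * √(1 + μ) = x * (gaussPoly B).eval x := by
  have hs : √(1 + μ) ≠ 0 := (sqrt_pos.2 hμ').ne'
  simp only [primGaussPoly, primErfcPoly, primErfCoeff, gaussPoly, derivative_add, derivative_neg,
    derivative_mul, derivative_C, derivative_X_pow_succ, derivative_X, eval_add, eval_mul, eval_neg,
    eval_C, eval_pow, eval_X, eval_zero, eval_one, eval_ofNat]
  field_simp
  ring

theorem primErfCoeff_sub_primErfcPoly_eval_zero (μ B : ℝ) :
    primErfCoeff μ B - (primErfcPoly μ B).eval 0 = Qfun μ B := by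
  simp only [primErfCoeff, primErfcPoly, Qfun, eval_add, eval_mul, eval_C, eval_pow, eval_X]
  ring

end Qcheck

theorem laplace_transform_of_Qcheck (μ B : ℝ) (hμ : 0 < μ) :
    ∫ X in Set.Ioi (0 : ℝ), Real.exp (-μ * X) * Qcheck X B = Qfun μ B := by
  simp_rw [Qcheck.eq_erfcSqrtPoly]
  rw [integral_exp_neg_mul_mul_erfcSqrtPoly hμ (Qcheck.primErfcPoly_ode hμ.ne' B)
    (Qcheck.primGaussPoly_ode hμ.ne' (by linarith) B), Qcheck.primErfCoeff_sub_primErfcPoly_eval_zero]
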